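/- arXiv:1107.0857 — 3 statements merged into one kernel-verified Lean document; each statement's English description precedes it below -/
import Mathlib

section
/- Let V be a ℚ-vector space, t a positive integer, and N a natural number. Suppose Q : (ℤ≥0)^t → V is a function such that for every index i and every choice of fixed values of the other t−1 variables, the resulting single-variable function n ↦ Q(..., n, ...) agrees with a polynomial function of degree at most N with coefficients in V. Then Q itself agrees with a polynomial function in t variables with coefficients in V. -/
/-!
Interpolating at the nodes `0, …, N` in the first variable gives
`Q x = ∑ m ≤ N, Lₘ(x₀) • Q (m, x₁, …)` with the Lagrange basis polynomials `Lₘ`. Each slice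
`y ↦ Q (m, y)` satisfies the hypothesis in one variable fewer, hence is polynomial by induction, and
polynomial functions are closed under sums and under multiplication by a polynomial in `x₀`.
-/

open Finset Polynomial

section

variable {ι V : Type*} [Fintype ι] [AddCommGroup V] [Module ℚ V]

def IsPolyFnOfDegreeLE (N : ℕ) (f : ℕ → V) : Prop :=
  ∃ v : Fin (N + 1) → V, ∀ n : ℕ, f n = ∑ j : Fin (N + 1), ((n : ℚ) ^ (j : ℕ)) • v j

noncomputable def natLagrangeBasis (N k : ℕ) : ℚ[X] :=
  Lagrange.basis (range (N + 1)) (fun m : ℕ => (m : ℚ)) k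

theorem pow_eq_sum_natLagrangeBasis {N j : ℕ} (hj : j ≤ N) (q : ℚ) :
    q ^ j = ∑ k ∈ range (N + 1), (natLagrangeBasis N k).eval q * (k : ℚ) ^ j := by
  have hdeg : (X ^ j : ℚ[X]).degree < #(range (N + 1)) := by
    rw [degree_X_pow, card_range]
    exact_mod_cast Nat.lt_succ_of_le hj
  have h := congrArg (eval q)
    (Lagrange.eq_interpolate (fun _ _ _ _ h => Nat.cast_injective h) hdeg)
  simp only [Lagrange.interpolate_apply, eval_pow, eval_X, eval_finsetSum, eval_mul,
    eval_C] at h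
  simp_rw [h, natLagrangeBasis, mul_comm]

theorem IsPolyFnOfDegreeLE.eq_sum_natLagrangeBasis {N : ℕ} {f : ℕ → V}
    (hf : IsPolyFnOfDegreeLE N f) (n : ℕ) :
    f n = ∑ k ∈ range (N + 1), (natLagrangeBasis N k).eval (n : ℚ) • f k := by
  obtain ⟨v, hv⟩ := hf
  calc f n = ∑ j : Fin (N + 1),
        (∑ k ∈ range (N + 1), (natLagrangeBasis N k).eval (n : ℚ) * (k : ℚ) ^ (j : ℕ)) • v j := by
        simp_rw [hv n, ← pow_eq_sum_natLagrangeBasis (Nat.lt_succ_iff.mp (Fin.is_lt _))]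
    _ = ∑ k ∈ range (N + 1), (natLagrangeBasis N k).eval (n : ℚ) • f k := by
        simp_rw [hv, sum_smul, smul_sum, mul_smul]
        exact sum_comm

variable (ι V) in
noncomputable def evalMonomials : ((ι → ℕ) →₀ V) →ₗ[ℚ] (ι → ℕ) → V :=
  Finsupp.lsum ℚ fun α => LinearMap.pi fun x => (∏ i, (x i : ℚ) ^ α i) • LinearMap.id

theorem evalMonomials_apply (c : (ι → ℕ) →₀ V) (x : ι → ℕ) :
    evalMonomials ι V c x = c.sum fun α v => (∏ i, (x i : ℚ) ^ α i) • v := by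
  simp [evalMonomials, Finsupp.lsum_apply, Finsupp.sum]

theorem evalMonomials_single (α : ι → ℕ) (v : V) :
    evalMonomials ι V (Finsupp.single α v) = fun x => (∏ i, (x i : ℚ) ^ α i) • v := by
  ext x
  simp [evalMonomials_apply]

variable (ι V) in
noncomputable def polyFns : Submodule ℚ ((ι → ℕ) → V) :=
  LinearMap.range (evalMonomials ι V)

theorem exists_sum_of_mem_polyFns {f : (ι → ℕ) → V} (hf : f ∈ polyFns ι V) :
    ∃ (s : Finset (ι → ℕ)) (c : (ι → ℕ) → V),
      ∀ x, f x = ∑ α ∈ s, (∏ i, (x i : ℚ) ^ α i) • c α := by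
  obtain ⟨c, rfl⟩ := hf
  exact ⟨c.support, c, fun x => evalMonomials_apply c x⟩

theorem monomial_smul_mem_polyFns (α : ι → ℕ) (v : V) :
    (fun x => (∏ i, (x i : ℚ) ^ α i) • v) ∈ polyFns ι V :=
  ⟨Finsupp.single α v, evalMonomials_single α v⟩

theorem eval_smul_comp_tail_mem_polyFns {t : ℕ} (p : ℚ[X]) {g : (Fin t → ℕ) → V}
    (hg : g ∈ polyFns (Fin t) V) :
    (fun x : Fin (t + 1) → ℕ => p.eval (x 0 : ℚ) • g (Fin.tail x)) ∈ polyFns (Fin (t + 1)) V := by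
  obtain ⟨c, rfl⟩ := hg
  induction c using Finsupp.induction_linear with
  | zero =>
    simp only [map_zero, Pi.zero_apply, smul_zero]
    exact zero_mem _
  | add c d hc hd =>
    simp only [map_add, Pi.add_apply, smul_add]
    exact add_mem hc hd
  | single α v =>
    have hsplit : (fun x : Fin (t + 1) → ℕ =>
          p.eval (x 0 : ℚ) • evalMonomials _ V (Finsupp.single α v) (Fin.tail x)) =
        ∑ k ∈ p.support,
          fun x => (∏ i, (x i : ℚ) ^ (Fin.cons k α : Fin (t + 1) → ℕ) i) • (p.coeff k • v) := by
      ext x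
      simp only [evalMonomials_single, eval_eq_sum, Polynomial.sum, Finset.sum_apply,
        Fin.prod_univ_succ, Fin.cons_zero, Fin.cons_succ, Fin.tail, smul_smul, sum_mul, sum_smul]
      exact sum_congr rfl fun k _ => by ring_nf
    rw [hsplit]
    exact sum_mem fun k _ => monomial_smul_mem_polyFns _ _

theorem mem_polyFns_of_forall_update {N : ℕ} :
    ∀ {t : ℕ} (Q : (Fin t → ℕ) → V),
      (∀ (i : Fin t) (x : Fin t → ℕ), IsPolyFnOfDegreeLE N fun n => Q (Function.update x i n)) →
      Q ∈ polyFns (Fin t) V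
  | 0, Q, _ => by
    convert monomial_smul_mem_polyFns (Fin.elim0 : Fin 0 → ℕ) (Q Fin.elim0) using 1
    ext x
    simp [Subsingleton.elim x Fin.elim0]
  | t + 1, Q, hQ => by
    have hexpand : Q = ∑ m ∈ range (N + 1),
        fun x => (natLagrangeBasis N m).eval (x 0 : ℚ) • Q (Fin.cons m (Fin.tail x)) := by
      ext x
      have hupdate (m : ℕ) : Function.update x 0 m = Fin.cons m (Fin.tail x) := by
        rw [← Fin.update_cons_zero (x 0), Fin.cons_self_tail]
      simpa only [Finset.sum_apply, Function.update_eq_self, hupdate] using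
        (hQ 0 x).eq_sum_natLagrangeBasis (x 0)
    rw [hexpand]
    refine sum_mem fun m _ => eval_smul_comp_tail_mem_polyFns _
      (mem_polyFns_of_forall_update (N := N) (fun y => Q (Fin.cons m y)) fun i y => ?_)
    simpa only [Fin.cons_update] using hQ i.succ (Fin.cons m y)

end

theorem stmt_0_general (V : Type*) [AddCommGroup V] [Module ℚ V]
    (t : ℕ) (N : ℕ) (Q : (Fin t → ℕ) → V)
    (h : ∀ (i : Fin t) (x : Fin t → ℕ), ∃ v : Fin (N + 1) → V,
      ∀ n : ℕ, Q (Function.update x i n) = ∑ j : Fin (N + 1), ((n : ℚ) ^ (j : ℕ)) • v j) :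
    ∃ (s : Finset (Fin t → ℕ)) (c : (Fin t → ℕ) → V),
      ∀ x : Fin t → ℕ, Q x = ∑ α ∈ s, (∏ i : Fin t, (x i : ℚ) ^ α i) • c α :=
  exists_sum_of_mem_polyFns (mem_polyFns_of_forall_update Q h)

/-- If `Q : (ℤ≥0)^t → V` agrees, in each variable separately, with a polynomial of
degree at most `N` with coefficients in the `ℚ`-vector space `V`, then `Q` agrees
with a polynomial function in `t` variables with coefficients in `V`. -/
theorem stmt_0 (V : Type*) [AddCommGroup V] [Module ℚ V]
    (t : ℕ) (ht : 0 < t) (N : ℕ) (Q : (Fin t → ℕ) → V)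
    (h : ∀ (i : Fin t) (x : Fin t → ℕ), ∃ v : Fin (N + 1) → V,
      ∀ n : ℕ, Q (Function.update x i n) = ∑ j : Fin (N + 1), ((n : ℚ) ^ (j : ℕ)) • v j) :
    ∃ (s : Finset (Fin t → ℕ)) (c : (Fin t → ℕ) → V),
      ∀ x : Fin t → ℕ, Q x = ∑ α ∈ s, (∏ i : Fin t, (x i : ℚ) ^ α i) • c α :=
  stmt_0_general V t N Q h
end

section
/- For all integers 1 ≤ l ≤ d, the coefficient of x^d in τ(x)^l, where τ(x) = Σ_{r≥1} (r^{r-1}/r!) x^r, equals (l!/d!) · C(d-1, l-1) · d^{d-l}. Equivalently, Σ over partitions ν of d of length l of (l!/|Aut(ν)|) · ∏_{i=1}^l ν_i^{ν_i - 1}/ν_i! = (l!/d!) · C(d-1, l-1) · d^{d-l}. -/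
/-!
The tree function satisfies `x τ' = τ (1 + x τ')`. Comparing coefficients, this is Abel's identity
`∑_{k=1}^n C(n,k) k^(k-1) (n-k)^(n-k) = n^n`, the value at `x = n` of the polynomial identity
`∑_{k=1}^n C(n,k) k^(k-1) (x-k)^(n-k) = n x^(n-1)`; the latter follows by induction on `n`, since
both sides have the same derivative and, for `n ≥ 2`, vanish at `x = 0` (there the left side is an
`n`-th finite difference of `k ↦ k^(n-1)`). Multiplying the differential equation by `τ^(l-1)`
gives `(l+1) x (τ^l)' - l x (τ^(l+1))' = l (l+1) τ^l`, so `c_l = [x^d] τ^l` satisfies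
`l d c_(l+1) = (l+1) (d-l) c_l`, which determines `c_l` from `c_1 = d^(d-1)/d!`.

The partition form is the multinomial expansion of `[x^d] τ^l`: a multiset `ν` of size `l` arises
from `l! / |Aut ν|` tuples.
-/

open Finset

theorem Finset.sum_range_succ_eq_sum_Icc_of_eq_zero {M : Type*} [AddCommMonoid M] {f : ℕ → M}
    (hf : f 0 = 0) (n : ℕ) : ∑ k ∈ range (n + 1), f k = ∑ k ∈ Icc 1 n, f k := by
  rw [range_eq_Ico, sum_eq_sum_Ico_succ_bot (by omega : 0 < n + 1), hf, zero_add, zero_add,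
    Ico_add_one_right_eq_Icc]

section Abel

open Polynomial

variable {R : Type*} [CommRing R]

theorem sum_range_neg_one_pow_mul_choose_mul_pow_eq_zero {m j : ℕ} (h : j < m) :
    ∑ k ∈ range (m + 1), (-1 : R) ^ (m - k) * m.choose k * (k : R) ^ j = 0 := by
  have hΔ := fwdDiff_iter_eq_sum_shift (1 : R) (fun r => r ^ j) m 0
  rw [fwdDiff_iter_pow_eq_zero_of_lt h] at hΔ
  simpa [zsmul_eq_mul] using hΔ.symm

theorem Polynomial.eq_of_derivative_eq_of_coeff_zero_eq [IsAddTorsionFree R] {p q : R[X]}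
    (hd : derivative p = derivative q) (h0 : p.coeff 0 = q.coeff 0) : p = q := by
  have h := eq_C_of_derivative_eq_zero (p := p - q) (by rw [derivative_sub, hd, sub_self])
  rwa [coeff_sub, h0, sub_self, C_0, sub_eq_zero] at h

noncomputable def abelPolynomial (R : Type*) [CommRing R] (n : ℕ) : R[X] :=
  ∑ k ∈ Icc 1 n, ((n.choose k * k ^ (k - 1) : ℕ) : R[X]) * (X - C (k : R)) ^ (n - k)

theorem derivative_abelPolynomial_succ (n : ℕ) :
    derivative (abelPolynomial R (n + 1)) = (n + 1 : R[X]) * abelPolynomial R n := by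
  have hterm : ∀ k ∈ Icc 1 (n + 1),
      derivative ((((n + 1).choose k * k ^ (k - 1) : ℕ) : R[X]) * (X - C (k : R)) ^ (n + 1 - k)) =
        (n + 1 : R[X]) * (((n.choose k * k ^ (k - 1) : ℕ) : R[X]) * (X - C (k : R)) ^ (n - k)) := by
    intro k hk
    have hc : (n + 1).choose k * k ^ (k - 1) * (n + 1 - k) = (n + 1) * (n.choose k * k ^ (k - 1)) := by
      rw [mul_right_comm, ← Nat.choose_mul_succ_eq]; ring
    rw [derivative_natCast_mul, derivative_X_sub_C_pow, show n + 1 - k - 1 = n - k by omega,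
      C_eq_natCast, ← mul_assoc, ← mul_assoc, ← Nat.cast_mul, hc]
    push_cast
    ring
  rw [abelPolynomial, derivative_sum, sum_congr rfl hterm, ← mul_sum, sum_Icc_succ_top (by omega),
    abelPolynomial]
  simp

theorem eval_zero_abelPolynomial_succ {n : ℕ} (hn : n ≠ 0) :
    (abelPolynomial R (n + 1)).eval 0 = 0 := by
  have hterm : ∀ k ∈ Icc 1 (n + 1),
      eval 0 ((((n + 1).choose k * k ^ (k - 1) : ℕ) : R[X]) * (X - C (k : R)) ^ (n + 1 - k)) =
        (-1 : R) ^ (n + 1 - k) * (n + 1).choose k * (k : R) ^ n := by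
    intro k hk
    have hk : 1 ≤ k ∧ k ≤ n + 1 := mem_Icc.mp hk
    rw [eval_mul, eval_natCast, eval_pow, eval_sub, eval_X, eval_C, zero_sub, neg_pow,
      show (k : R) ^ n = (k : R) ^ (k - 1) * (k : R) ^ (n + 1 - k) by
        rw [← pow_add]; congr 1; omega]
    push_cast
    ring
  rw [abelPolynomial, eval_finsetSum, sum_congr rfl hterm,
    ← sum_range_succ_eq_sum_Icc_of_eq_zero (by simp [zero_pow hn]),
    sum_range_neg_one_pow_mul_choose_mul_pow_eq_zero n.lt_succ_self]

theorem abelPolynomial_eq [IsAddTorsionFree R] {n : ℕ} (hn : 1 ≤ n) :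
    abelPolynomial R n = (n : R[X]) * X ^ (n - 1) := by
  induction n, hn using Nat.le_induction with
  | base => simp [abelPolynomial]
  | succ n hn ih =>
    apply eq_of_derivative_eq_of_coeff_zero_eq
    · rw [derivative_abelPolynomial_succ, ih]
      simp [derivative_X_pow]
    · rw [coeff_zero_eq_eval_zero, coeff_zero_eq_eval_zero, eval_zero_abelPolynomial_succ (by omega)]
      simp [zero_pow (by omega : n ≠ 0)]

theorem Nat.sum_choose_mul_pow_mul_sub_pow {n : ℕ} (hn : 1 ≤ n) :
    ∑ k ∈ Icc 1 n, n.choose k * k ^ (k - 1) * (n - k) ^ (n - k) = n ^ n := by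
  have h := congrArg (eval (n : ℤ)) (abelPolynomial_eq (R := ℤ) hn)
  simp only [abelPolynomial, eval_finsetSum, eval_mul, eval_natCast, eval_pow, eval_sub, eval_X,
    eval_C] at h
  rw [← Nat.cast_inj (R := ℤ), ← mul_pow_sub_one (by omega : n ≠ 0)]
  push_cast at h ⊢
  rw [← h]
  refine sum_congr rfl fun k hk => ?_
  rw [Nat.cast_sub (mem_Icc.mp hk).2]

end Abel

open PowerSeries

theorem PowerSeries.coeff_X_mul_derivative {R : Type*} [CommSemiring R] (f : R⟦X⟧) (n : ℕ) :
    coeff n (X * d⁄dX R f) = n * coeff n f := by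
  cases n with
  | zero => simp
  | succ n => rw [coeff_succ_X_mul, coeff_derivative]; push_cast; ring

section DifferentialEquation

variable {R : Type*} [CommRing R] {f : R⟦X⟧}

theorem PowerSeries.X_mul_derivative_pow_recurrence (hf : X * d⁄dX R f = f * (1 + X * d⁄dX R f))
    (l : ℕ) :
    ((l : R⟦X⟧) + 1) * (X * d⁄dX R (f ^ l)) - (l : R⟦X⟧) * (X * d⁄dX R (f ^ (l + 1))) =
      (l : R⟦X⟧) * ((l : R⟦X⟧) + 1) * f ^ l := by
  rcases l with _ | m
  · simp
  · simp only [derivative_pow, add_tsub_cancel_right]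
    push_cast
    linear_combination ((m : R⟦X⟧) + 1) * ((m : R⟦X⟧) + 2) * f ^ m * hf

theorem PowerSeries.coeff_pow_succ_of_X_mul_derivative_eq
    (hf : X * d⁄dX R f = f * (1 + X * d⁄dX R f)) (l d : ℕ) :
    l * d * coeff d (f ^ (l + 1)) = (l + 1) * (d - l) * coeff d (f ^ l) := by
  have h := congrArg (coeff d) (X_mul_derivative_pow_recurrence hf l)
  simp only [map_sub, ← map_natCast (C (R := R)), ← map_one (C (R := R)), ← map_add, ← map_mul,
    coeff_C_mul, coeff_X_mul_derivative] at h
  linear_combination -h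

end DifferentialEquation

section TreeFunction

noncomputable def treeFunction : ℚ⟦X⟧ :=
  mk fun r => if r = 0 then 0 else (r : ℚ) ^ (r - 1) / r.factorial

@[simp]
theorem constantCoeff_treeFunction : constantCoeff treeFunction = 0 := by
  simp [treeFunction, ← coeff_zero_eq_constantCoeff_apply]

theorem coeff_treeFunction_of_ne_zero {r : ℕ} (hr : r ≠ 0) :
    coeff r treeFunction = (r : ℚ) ^ (r - 1) / r.factorial := by
  simp [treeFunction, hr]

theorem coeff_one_add_X_mul_derivative_treeFunction (n : ℕ) :
    coeff n (1 + X * d⁄dX ℚ treeFunction) = (n : ℚ) ^ n / n.factorial := by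
  rcases eq_or_ne n 0 with rfl | hn
  · simp
  · rw [map_add, coeff_one, if_neg hn, zero_add, coeff_X_mul_derivative,
      coeff_treeFunction_of_ne_zero hn, mul_div_assoc', ← pow_succ', Nat.sub_add_cancel (by omega)]

theorem X_mul_derivative_treeFunction :
    X * d⁄dX ℚ treeFunction = treeFunction * (1 + X * d⁄dX ℚ treeFunction) := by
  ext n
  rw [coeff_X_mul_derivative, coeff_mul, Nat.sum_antidiagonal_eq_sum_range_succ
    (fun i j => coeff i treeFunction * coeff j (1 + X * d⁄dX ℚ treeFunction))]
  simp only [coeff_one_add_X_mul_derivative_treeFunction]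
  rcases eq_or_ne n 0 with rfl | hn
  · simp
  have hterm : ∀ k ∈ Icc 1 n, coeff k treeFunction * (((n - k : ℕ) : ℚ) ^ (n - k) /
      (n - k).factorial) = (n.choose k * k ^ (k - 1) * (n - k) ^ (n - k) : ℕ) / n.factorial := by
    intro k hk
    obtain ⟨hk1, hkn⟩ := mem_Icc.mp hk
    rw [coeff_treeFunction_of_ne_zero (by omega), ← Nat.choose_mul_factorial_mul_factorial hkn]
    have := Nat.factorial_pos k
    have := Nat.factorial_pos (n - k)
    have := Nat.choose_pos hkn
    push_cast
    field_simp
  rw [sum_range_succ_eq_sum_Icc_of_eq_zero (by simp), sum_congr rfl hterm, ← sum_div,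
    ← Nat.cast_sum, Nat.sum_choose_mul_pow_mul_sub_pow (by omega), coeff_treeFunction_of_ne_zero hn,
    mul_div_assoc', Nat.cast_pow, ← pow_succ', Nat.sub_add_cancel (by omega)]

theorem coeff_treeFunction_pow {d l : ℕ} (hl : 1 ≤ l) (hd : l ≤ d) :
    coeff d (treeFunction ^ l) =
      ((l.factorial : ℚ) / (d.factorial : ℚ)) * (((d - 1).choose (l - 1) : ℕ) : ℚ) *
        (d : ℚ) ^ (d - l) := by
  induction l, hl using Nat.le_induction with
  | base => simp [coeff_treeFunction_of_ne_zero (by omega : d ≠ 0)]; ring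
  | succ l hl ih =>
    have hchoose : ((d - 1).choose l : ℚ) * l = (d - 1).choose (l - 1) * ((d : ℚ) - l) := by
      have h := Nat.choose_succ_right_eq (d - 1) (l - 1)
      rw [Nat.sub_add_cancel hl, show d - 1 - (l - 1) = d - l by omega] at h
      rw [← Nat.cast_sub (by omega)]
      exact_mod_cast h
    have hld : (l : ℚ) * d ≠ 0 := mul_ne_zero (by exact_mod_cast (by omega : l ≠ 0))
      (by exact_mod_cast (by omega : d ≠ 0))
    apply mul_left_cancel₀ hld
    rw [coeff_pow_succ_of_X_mul_derivative_eq X_mul_derivative_treeFunction, ih (by omega),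
      Nat.factorial_succ, Nat.add_sub_cancel, show d - l = d - (l + 1) + 1 by omega, pow_succ]
    push_cast
    linear_combination
      (-l.factorial / d.factorial * (d : ℚ) ^ (d - (l + 1)) * d * (l + 1)) * hchoose

end TreeFunction

section Partitions

theorem Multiset.countPerms_mul_prod_factorial_count {α : Type*} [DecidableEq α] (m : Multiset α) :
    m.countPerms * ∏ j ∈ m.toFinset, (m.count j).factorial = (Multiset.card m).factorial := by
  rw [mul_comm, ← m.toFinset_sum_count_eq, countPerms, Finsupp.multinomial_eq,
    Multiset.toFinsupp_support]
  exact Nat.multinomial_spec m.toFinset (fun j => m.count j)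

theorem Multiset.countPerms_eq_factorial_div {α K : Type*} [DecidableEq α] [Field K] [CharZero K]
    (m : Multiset α) :
    (m.countPerms : K) =
      (Multiset.card m).factorial / ((∏ j ∈ m.toFinset, (m.count j).factorial : ℕ) : K) := by
  rw [eq_div_iff (Nat.cast_ne_zero.mpr (prod_ne_zero_iff.mpr fun _ _ => Nat.factorial_ne_zero _)),
    ← Nat.cast_mul, countPerms_mul_prod_factorial_count]

theorem Polynomial.multiset_prod_monomial {R : Type*} [CommSemiring R] (a : ℕ → R)
    (m : Multiset ℕ) : (m.map fun r => monomial r (a r)).prod = monomial m.sum (m.map a).prod := by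
  induction m using Multiset.induction_on with
  | empty => simp
  | cons r m ih => simp [ih, monomial_mul_monomial]

theorem Polynomial.coeff_pow_sum_monomial {R : Type*} [CommSemiring R] (a : ℕ → R) (s : Finset ℕ)
    (d l : ℕ) :
    ((∑ r ∈ s, monomial r (a r)) ^ l).coeff d =
      ∑ k ∈ s.sym l, if (k : Multiset ℕ).sum = d then
        (k : Multiset ℕ).countPerms * ((k : Multiset ℕ).map a).prod else 0 := by
  rw [Finset.sum_pow, finsetSum_coeff]
  refine sum_congr rfl fun k _ => ?_
  rw [multiset_prod_monomial, ← C_eq_natCast, coeff_C_mul, coeff_monomial, mul_ite, mul_zero]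
  congr

theorem PowerSeries.coeff_pow_eq_coeff_trunc_pow {R : Type*} [CommSemiring R] (f : R⟦X⟧)
    (d l : ℕ) : coeff d (f ^ l) = ((trunc (d + 1) f) ^ l).coeff d := by
  rw [← Polynomial.coeff_coe, Polynomial.coe_pow, ← coeff_coe_trunc_of_lt (Nat.lt_add_one d),
    ← trunc_trunc_pow, coeff_coe_trunc_of_lt (Nat.lt_add_one d)]

theorem PowerSeries.coeff_pow_eq_sum_partitions {R : Type*} [CommSemiring R] {f : R⟦X⟧}
    (hf : constantCoeff f = 0) (d l : ℕ) :
    coeff d (f ^ l) = ∑ ν ∈ univ.filter (fun ν : d.Partition => ν.parts.card = l),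
      ν.parts.countPerms * (ν.parts.map (coeff · f)).prod := by
  classical
  rw [coeff_pow_eq_coeff_trunc_pow, trunc_apply, Polynomial.coeff_pow_sum_monomial]
  symm
  refine sum_bij_ne_zero (fun ν hν _ => ⟨ν.parts, (mem_filter.mp hν).2⟩) ?_ ?_ ?_ ?_
  · exact fun ν _ _ => mem_sym_iff.mpr fun r hr =>
      mem_Ico.mpr ⟨r.zero_le, Nat.lt_succ_of_le (Nat.Partition.le_of_mem_parts hr)⟩
  · exact fun ν _ _ μ _ _ h => Nat.Partition.ext (congrArg Subtype.val h)
  · intro k _ hk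
    have hsum : (k : Multiset ℕ).sum = d := by by_contra h; exact hk (if_neg h)
    rw [if_pos hsum] at hk
    have hpos : ∀ {r}, r ∈ (k : Multiset ℕ) → 0 < r := fun {r} hr => Nat.pos_of_ne_zero fun h0 =>
      have hr0 : coeff r f = 0 := by rw [h0, coeff_zero_eq_constantCoeff_apply, hf]
      hk (by rw [Multiset.prod_eq_zero (hr0 ▸ Multiset.mem_map_of_mem (coeff · f) hr), mul_zero])
    exact ⟨⟨k, hpos, hsum⟩, mem_filter.mpr ⟨mem_univ _, k.2⟩, by simpa [if_pos hsum] using hk, rfl⟩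
  · intro ν _ _
    simp [ν.parts_sum]

end Partitions

/-- For `1 ≤ l ≤ d`, the `x^d` coefficient of `τ^l` (with `τ` the tree function)
is `(l!/d!)·C(d-1,l-1)·d^{d-l}`; equivalently, the corresponding sum over
partitions of `d` of length `l` equals the same quantity. -/
theorem stmt_6 (d l : ℕ) (hl : 1 ≤ l) (hd : l ≤ d)
    (τ : PowerSeries ℚ)
    (hτ : ∀ r : ℕ, PowerSeries.coeff r τ =
      if r = 0 then 0 else (r : ℚ) ^ (r - 1) / r.factorial) :
    PowerSeries.coeff d (τ ^ l) =
      ((l.factorial : ℚ) / (d.factorial : ℚ)) * (((d - 1).choose (l - 1) : ℕ) : ℚ) *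
        (d : ℚ) ^ (d - l)
    ∧ ∑ ν ∈ Finset.univ.filter (fun ν : d.Partition => ν.parts.card = l),
        ((l.factorial : ℚ) / ((∏ j ∈ ν.parts.toFinset, (ν.parts.count j).factorial : ℕ) : ℚ)) *
          (ν.parts.map (fun r : ℕ => (r : ℚ) ^ (r - 1) / (r.factorial : ℚ))).prod =
      ((l.factorial : ℚ) / (d.factorial : ℚ)) * (((d - 1).choose (l - 1) : ℕ) : ℚ) *
        (d : ℚ) ^ (d - l) := by
  obtain rfl : τ = treeFunction := ext fun r => by rw [hτ, treeFunction, coeff_mk]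
  have hcoeff := coeff_treeFunction_pow hl hd
  refine ⟨hcoeff, ?_⟩
  rw [← hcoeff, coeff_pow_eq_sum_partitions constantCoeff_treeFunction]
  refine sum_congr rfl fun ν hν => ?_
  rw [Multiset.countPerms_eq_factorial_div, (mem_filter.mp hν).2,
    Multiset.map_congr rfl fun r hr => coeff_treeFunction_of_ne_zero (ν.parts_pos hr).ne']
end

section
/- Let d be a positive integer and let f : ℕ × ℕ → ℚ be any function. Then the following reindexing identity holds: Σ over partitions ν of d, over distinguished parts (i.e., over 1 ≤ e ≤ d counted with the multiplicity m_e(ν) of e in ν) of (1/|Aut(ν)|) · e^2 · (∏_{i=1}^{l(ν)} ν_i^{ν_i-1}/ν_i!) · f(l(ν), e) equals Σ_{e=1}^{d} (e^{e+1}/e!) · Σ over partitions μ of d−e of (1/|Aut(μ)|) · (∏_{i=1}^{l(μ)} μ_i^{μ_i-1}/μ_i!) · f(l(μ)+1, e), where the empty partition of 0 contributes the empty product 1 with |Aut| = 1. -/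
/-!
Extend the inner sum to all `1 ≤ e ≤ d` (the multiplicity vanishes off the parts) and swap the
sums. For fixed `e`, a partition `ν ⊢ d` with a marked part `e` is a partition `μ ⊢ d - e` with
`e` added, and the factor `mₑ(ν) = mₑ(μ) + 1` cancels against `|Aut ν| = (mₑ(μ) + 1) |Aut μ|`;
the new part contributes `e² · e^(e-1)/e! = e^(e+1)/e!`.
-/

open Finset

section AutCard

variable {α : Type*} [DecidableEq α]

def autCard (s : Multiset α) : ℕ := ∏ j ∈ s.toFinset, (s.count j).factorial

theorem autCard_pos (s : Multiset α) : 0 < autCard s :=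
  prod_pos fun _ _ => Nat.factorial_pos _

theorem autCard_cons (a : α) (s : Multiset α) :
    autCard (a ::ₘ s) = (s.count a + 1) * autCard s := by
  have hsub : s.toFinset ⊆ (a ::ₘ s).toFinset := by simp [Multiset.toFinset_cons]
  have hext : autCard s = ∏ j ∈ (a ::ₘ s).toFinset, (s.count j).factorial :=
    prod_subset hsub fun j _ hj => by simp [Multiset.count_eq_zero.2 (by simpa using hj)]
  have ha : a ∈ (a ::ₘ s).toFinset := by simp
  rw [hext, autCard, ← mul_prod_erase _ _ ha,
    ← mul_prod_erase _ (fun j => (s.count j).factorial) ha, Multiset.count_cons_self, Nat.factorial_succ, mul_assoc]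
  congr 2
  exact prod_congr rfl fun j hj => by rw [Multiset.count_cons_of_ne (ne_of_mem_erase hj)]

end AutCard

def partitionWeight (s : Multiset ℕ) : ℚ :=
  1 / (autCard s : ℚ) * (s.map fun r : ℕ => (r : ℚ) ^ (r - 1) / (r.factorial : ℚ)).prod

theorem count_succ_mul_partitionWeight_cons (a : ℕ) (s : Multiset ℕ) :
    (s.count a + 1 : ℚ) * partitionWeight (a ::ₘ s)
      = (a : ℚ) ^ (a - 1) / (a.factorial : ℚ) * partitionWeight s := by
  have hc : (s.count a + 1 : ℚ) ≠ 0 := by positivity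
  have hA : (autCard s : ℚ) ≠ 0 := by exact_mod_cast (autCard_pos s).ne'
  simp only [partitionWeight, autCard_cons, Multiset.map_cons, Multiset.prod_cons]
  push_cast
  field_simp

namespace Nat.Partition

theorem parts_toFinset_subset_Icc {n : ℕ} (ν : n.Partition) : ν.parts.toFinset ⊆ Icc 1 n :=
  fun _ hj => mem_Icc.2 ⟨ν.parts_pos (Multiset.mem_toFinset.1 hj),
    le_of_mem_parts (Multiset.mem_toFinset.1 hj)⟩

/-- Marking one of the `mₐ(ν)` parts of size `a` in a partition `ν ⊢ n` is the same as
adding a part `a` to a partition `μ ⊢ n - a`, which can be marked in `mₐ(μ) + 1` ways. -/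
theorem sum_count_mul_eq_sum_cons {R : Type*} [Semiring R] {n a : ℕ} (ha1 : 1 ≤ a) (ha : a ≤ n)
    (F : Multiset ℕ → R) :
    ∑ ν : n.Partition, (ν.parts.count a : R) * F ν.parts
      = ∑ μ : (n - a).Partition, (μ.parts.count a + 1 : R) * F (a ::ₘ μ.parts) := by
  classical
  rw [← sum_filter_of_ne (p := fun ν : n.Partition => a ∈ ν.parts) fun ν _ h => by
      by_contra hν; simp [Multiset.count_eq_zero.2 hν] at h,
    sum_subtype (p := fun ν : n.Partition => a ∈ ν.parts) _ (by simp),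
    ← (partitionWithPartEquiv ha1 ha).symm.sum_comp]
  simp [Multiset.count_cons_self]

end Nat.Partition

theorem stmt_7_general (d : ℕ) (f : ℕ → ℕ → ℚ) :
    ∑ ν : d.Partition, ∑ e ∈ ν.parts.toFinset,
      (ν.parts.count e : ℚ) *
        (1 / ((∏ j ∈ ν.parts.toFinset, (ν.parts.count j).factorial : ℕ) : ℚ)) *
        (e : ℚ) ^ 2 * (ν.parts.map (fun r : ℕ => (r : ℚ) ^ (r - 1) / (r.factorial : ℚ))).prod *
        f ν.parts.card e
    = ∑ e ∈ Finset.Icc 1 d, ((e : ℚ) ^ (e + 1) / (e.factorial : ℚ)) *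
        ∑ μ : (d - e).Partition,
          (1 / ((∏ j ∈ μ.parts.toFinset, (μ.parts.count j).factorial : ℕ) : ℚ)) *
          (μ.parts.map (fun r : ℕ => (r : ℚ) ^ (r - 1) / (r.factorial : ℚ))).prod *
          f (μ.parts.card + 1) e := by
  let G (e : ℕ) (s : Multiset ℕ) : ℚ := partitionWeight s * (e : ℚ) ^ 2 * f s.card e
  calc _ = ∑ ν : d.Partition, ∑ e ∈ Icc 1 d, (ν.parts.count e : ℚ) * G e ν.parts := by
        refine sum_congr rfl fun ν _ => ?_
        rw [← sum_subset ν.parts_toFinset_subset_Icc fun e _ he => by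
          simp [Multiset.count_eq_zero.2 (by simpa using he)]]
        refine sum_congr rfl fun e _ => ?_
        simp only [G, partitionWeight, autCard]
        ring
    _ = ∑ e ∈ Icc 1 d, ∑ μ : (d - e).Partition,
          (μ.parts.count e + 1 : ℚ) * G e (e ::ₘ μ.parts) := by
        rw [sum_comm]
        exact sum_congr rfl fun e he =>
          Nat.Partition.sum_count_mul_eq_sum_cons (mem_Icc.1 he).1 (mem_Icc.1 he).2 _
    _ = _ := by
        refine sum_congr rfl fun e he => ?_
        obtain ⟨he1, -⟩ := mem_Icc.1 he
        rw [mul_sum]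
        refine sum_congr rfl fun μ _ => ?_
        have hpow : (e : ℚ) ^ (e + 1) = (e : ℚ) ^ (e - 1) * (e : ℚ) ^ 2 := by
          rw [← pow_add]; congr 1; omega
        simp only [G, ← mul_assoc, count_succ_mul_partitionWeight_cons, Multiset.card_cons, hpow]
        simp only [partitionWeight, autCard]
        ring

/-- Reindexing identity: summing over partitions `ν ⊢ d` with a distinguished part `e`
(counted with multiplicity) the weight `(1/|Aut ν|)·e²·∏ νᵢ^{νᵢ-1}/νᵢ!·f(l(ν),e)`
equals summing over `e` and partitions `μ ⊢ d-e` the weight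
`(e^{e+1}/e!)·(1/|Aut μ|)·∏ μᵢ^{μᵢ-1}/μᵢ!·f(l(μ)+1,e)`. -/
theorem stmt_7 (d : ℕ) (hd : 0 < d) (f : ℕ → ℕ → ℚ) :
    ∑ ν : d.Partition, ∑ e ∈ ν.parts.toFinset,
      (ν.parts.count e : ℚ) *
        (1 / ((∏ j ∈ ν.parts.toFinset, (ν.parts.count j).factorial : ℕ) : ℚ)) *
        (e : ℚ) ^ 2 * (ν.parts.map (fun r : ℕ => (r : ℚ) ^ (r - 1) / (r.factorial : ℚ))).prod *
        f ν.parts.card e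
    = ∑ e ∈ Finset.Icc 1 d, ((e : ℚ) ^ (e + 1) / (e.factorial : ℚ)) *
        ∑ μ : (d - e).Partition,
          (1 / ((∏ j ∈ μ.parts.toFinset, (μ.parts.count j).factorial : ℕ) : ℚ)) *
          (μ.parts.map (fun r : ℕ => (r : ℚ) ^ (r - 1) / (r.factorial : ℚ))).prod *
          f (μ.parts.card + 1) e :=
  stmt_7_general d f
end
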